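/- Let r ≥ 2 and a₁,…,aₙ be positive integers with gcd(aⱼ, r) = 1 for all j, and let Δ(t) = ∑_{i=1}^r σ_{r−i} t^i be the Dedekind sum polynomial of type (1/r)(a₁,…,aₙ). Then (1−t)ⁿ·Δ(t) is congruent modulo F = (1−t^r)/(1−t) to a Laurent polynomial with integer coefficients supported in any prescribed window of r−1 consecutive exponents; equivalently, the inverse of ∏ⱼ((1−t^{aⱼ})/(1−t)) modulo F with support in [γ+1, γ+r−1] has integer coefficients, for any γ ∈ ℤ. -/

import Mathlib

/-!
At a nontrivial `r`-th root of unity `ζᵏ` the Dedekind sum polynomial takes the value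
`1 / ∏ⱼ (1 - ζ^(k aⱼ))` by discrete Fourier inversion, so `∏ⱼ (1 - t^aⱼ) · Δ ≡ 1` modulo `F`,
whose roots are exactly these `ζᵏ`. As `∏ⱼ (1 - t^aⱼ) = Q · (1 - t)ⁿ` with `Q = ∏ⱼ [aⱼ]_t`,
the class of `(1 - t)ⁿ Δ` is the inverse of `Q` modulo `F`. That inverse is integral: if
`aⱼ bⱼ ≡ 1 (mod r)` then `[aⱼ]_t · [bⱼ]_(t^aⱼ) = [aⱼ bⱼ]_t ≡ 1 (mod F)`. Finally `t^r ≡ 1` and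
`F` is monic of degree `r - 1`, so every class has a representative supported in any window of
`r - 1` consecutive exponents: shift, then divide with remainder.
-/

open Polynomial Finset

section GeomSum

variable {R : Type*}

theorem geom_sum_mul_geom_sum_pow [CommSemiring R] (x : R) (a b : ℕ) :
    (∑ i ∈ range a, x ^ i) * ∑ i ∈ range b, (x ^ a) ^ i = ∑ i ∈ range (a * b), x ^ i := by
  induction b with
  | zero => simp
  | succ b ih =>
    rw [sum_range_succ, mul_add, ih, Nat.mul_succ, sum_range_add, ← pow_mul, sum_mul]
    simp only [pow_add, mul_comm]

variable [CommRing R]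

theorem geom_sum_dvd_geom_sum_sub_geom_sum_mod (x : R) (r m : ℕ) :
    (∑ i ∈ range r, x ^ i) ∣ ∑ i ∈ range m, x ^ i - ∑ i ∈ range (m % r), x ^ i := by
  suffices h : ∀ q s, (∑ i ∈ range r, x ^ i) ∣
      ∑ i ∈ range (r * q + s), x ^ i - ∑ i ∈ range s, x ^ i by
    simpa only [Nat.div_add_mod] using h (m / r) (m % r)
  intro q s
  have hpow : (∑ i ∈ range r, x ^ i) ∣ x ^ (r * q) - 1 :=
    (Dvd.intro _ (geom_sum_mul x r)).trans (pow_one_sub_dvd_pow_mul_sub_one x r q)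
  have : ∑ i ∈ range (r * q + s), x ^ i - ∑ i ∈ range s, x ^ i
      = (∑ i ∈ range r, x ^ i) * ∑ i ∈ range q, (x ^ r) ^ i
        + (x ^ (r * q) - 1) * ∑ i ∈ range s, x ^ i := by
    rw [sum_range_add, geom_sum_mul_geom_sum_pow, sub_mul, one_mul, mul_sum]
    simp only [pow_add]
    ring
  rw [this]
  exact dvd_add (dvd_mul_right _ _) (hpow.mul_right _)

theorem isCoprime_geom_sum_geom_sum (x : R) {a r : ℕ} (ha : a.Coprime r) (hr : 1 < r) :
    IsCoprime (∑ i ∈ range a, x ^ i) (∑ i ∈ range r, x ^ i) := by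
  obtain ⟨b, -, hab⟩ := Nat.exists_mul_mod_eq_one_of_coprime ha hr
  obtain ⟨w, hw⟩ := geom_sum_dvd_geom_sum_sub_geom_sum_mod x r (a * b)
  refine ⟨∑ i ∈ range b, (x ^ a) ^ i, -w, ?_⟩
  rw [hab, ← geom_sum_mul_geom_sum_pow] at hw
  simp only [range_one, sum_singleton, pow_zero] at hw
  linear_combination hw

theorem prod_geom_sum_mul_one_sub_pow {ι : Type*} [Fintype ι] (x : R) (a : ι → ℕ) :
    (∏ j, ∑ i ∈ range (a j), x ^ i) * (1 - x) ^ Fintype.card ι = ∏ j, (1 - x ^ a j) := by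
  rw [← card_univ, ← prod_const, ← prod_mul_distrib]
  exact prod_congr rfl fun j _ => geom_sum_mul_neg x (a j)

theorem dvd_sub_of_dvd_mul_sub_one {f q x y : R} (hx : f ∣ q * x - 1) (hy : f ∣ q * y - 1) :
    f ∣ x - y := by
  have : x - y = y * (q * x - 1) - x * (q * y - 1) := by ring
  rw [this]
  exact dvd_sub (hx.mul_left y) (hy.mul_left x)

end GeomSum

theorem Polynomial.natDegree_geom_sum_X {R : Type*} [CommRing R] [Nontrivial R] (r : ℕ) :
    (∑ i ∈ range r, (X : R[X]) ^ i).natDegree = r - 1 := by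
  rcases Nat.eq_zero_or_pos r with rfl | hr
  · simp
  have hmul : (X - C 1) * ∑ i ∈ range r, (X : R[X]) ^ i = X ^ r - C 1 := by
    rw [map_one]; exact mul_geom_sum X r
  have := congrArg natDegree hmul
  rw [(monic_X_sub_C 1).natDegree_mul (monic_geom_sum_X hr.ne'), natDegree_X_sub_C,
    natDegree_X_pow_sub_C] at this
  omega

namespace LaurentPolynomial

variable {R : Type*}

theorem mem_support_T_mul_toLaurent [Semiring R] {n m : ℤ} {p : R[X]}
    (hm : m ∈ (T n * toLaurent p).coeff.support) : ∃ k ∈ p.support, m = n + k := by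
  rw [T, AddMonoidAlgebra.support_coeff_single_mul _ _ (by simp), support_coeff_toLaurent] at hm
  simp only [Finset.mem_map, Nat.castEmbedding_apply, addLeftEmbedding_apply] at hm
  obtain ⟨_, ⟨k, hk, rfl⟩, rfl⟩ := hm
  exact ⟨k, hk, rfl⟩

theorem mapRingHom_toLaurent [Semiring R] {S : Type*} [Semiring S] (f : R →+* S) (p : R[X]) :
    AddMonoidAlgebra.mapRingHom ℤ f (toLaurent p) = toLaurent (p.map f) := by
  induction p using Polynomial.induction_on' with
  | add p q hp hq => simp [hp, hq]
  | monomial n a =>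
    simp [← C_mul_X_pow_eq_monomial, ← single_eq_C_mul_T]

variable [CommRing R]

theorem toLaurent_geom_sum_dvd_T_mul_sub_one (r e : ℕ) :
    toLaurent (∑ i ∈ range r, (X : R[X]) ^ i) ∣ T (r * e : ℕ) - 1 := by
  rw [← toLaurent_X_pow, ← map_one toLaurent, ← map_sub]
  exact map_dvd _ ((Dvd.intro _ (geom_sum_mul X r)).trans (pow_one_sub_dvd_pow_mul_sub_one X r e))

theorem exists_support_subset_Icc_toLaurent_dvd_sub [Nontrivial R] {r : ℕ} (hr : 0 < r)
    (p : R[X]) (γ : ℤ) :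
    ∃ B : R[T;T⁻¹], (B.coeff.support : Set ℤ) ⊆ Set.Icc (γ + 1) (γ + r - 1) ∧
      toLaurent (∑ i ∈ range r, (X : R[X]) ^ i) ∣ toLaurent p - B := by
  set F : R[X] := ∑ i ∈ range r, X ^ i
  have hF : F.Monic := monic_geom_sum_X hr.ne'
  -- `B := T^(γ+1) · (X^c p mod F)` works because `T^(γ+1) · X^c = T^(r e) ≡ 1 (mod F)`.
  obtain ⟨c, e, hce⟩ : ∃ c e : ℕ, (c : ℤ) + (γ + 1) = (r * e : ℕ) := by
    refine ⟨((r * (γ + 1).toNat : ℕ) - (γ + 1)).toNat, (γ + 1).toNat, ?_⟩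
    have : γ + 1 ≤ ((r * (γ + 1).toNat : ℕ) : ℤ) := by
      push_cast
      nlinarith [Int.self_le_toNat (γ + 1), (γ + 1).toNat.cast_nonneg (α := ℤ)]
    omega
  set N := (X ^ c * p) %ₘ F
  refine ⟨T (γ + 1) * toLaurent N, ?_, ?_⟩
  · intro m hm
    obtain ⟨k, hk, rfl⟩ := mem_support_T_mul_toLaurent hm
    have hN0 : N ≠ 0 := by rintro h; simp [h] at hk
    have hdeg := natDegree_lt_natDegree hN0 (degree_modByMonic_lt _ hF)
    rw [natDegree_geom_sum_X] at hdeg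
    have := le_natDegree_of_mem_supp k hk
    constructor <;> omega
  · have hN : N = X ^ c * p - F * (X ^ c * p /ₘ F) :=
      eq_sub_of_add_eq (modByMonic_add_div _ F)
    have hT : (T (γ + 1) * T c : R[T;T⁻¹]) = T (r * e : ℕ) := by rw [← T_add, ← hce, add_comm]
    have : toLaurent p - T (γ + 1) * toLaurent N = T (γ + 1) * toLaurent F *
        toLaurent (X ^ c * p /ₘ F) - (T (r * e : ℕ) - 1) * toLaurent p := by
      rw [hN, map_sub, map_mul, map_mul, toLaurent_X_pow, ← hT]
      ring
    rw [this]
    exact dvd_sub ((dvd_mul_left _ _).mul_right _)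
      ((toLaurent_geom_sum_dvd_T_mul_sub_one r e).mul_right _)

theorem exists_support_subset_Icc_toLaurent_dvd_mul_sub_one [Nontrivial R] {r : ℕ} (hr : 0 < r)
    {q : R[X]} (hq : IsCoprime q (∑ i ∈ range r, X ^ i)) (γ : ℤ) :
    ∃ B : R[T;T⁻¹], (B.coeff.support : Set ℤ) ⊆ Set.Icc (γ + 1) (γ + r - 1) ∧
      toLaurent (∑ i ∈ range r, (X : R[X]) ^ i) ∣ toLaurent q * B - 1 := by
  obtain ⟨u, v, huv⟩ := hq
  obtain ⟨B, hB, hdvd⟩ := exists_support_subset_Icc_toLaurent_dvd_sub hr u γ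
  refine ⟨B, hB, ?_⟩
  have : toLaurent q * B - 1
      = -(toLaurent q * (toLaurent u - B) + toLaurent v * toLaurent (∑ i ∈ range r, X ^ i)) := by
    rw [← map_one toLaurent, ← huv, map_add, map_mul, map_mul]
    ring
  rw [this]
  exact (dvd_add (hdvd.mul_left _) (dvd_mul_left _ _)).neg_right

end LaurentPolynomial

theorem sum_Icc_one_pow_eq_zero {K : Type*} [Field K] {w : K} {r : ℕ} (hw : w ^ r = 1)
    (hw1 : w ≠ 1) : ∑ i ∈ Icc 1 r, w ^ i = 0 := by
  rw [← Ico_add_one_right_eq_Icc, sum_Ico_eq_sum_range, Nat.add_sub_cancel]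
  simp only [pow_add, pow_one, ← mul_sum]
  rw [geom_sum_eq hw1, hw, sub_self, zero_div, mul_zero]

namespace IsPrimitiveRoot

variable {K : Type*} [Field K] {ζ : K} {r : ℕ}

theorem pow_mul_ne_one {M : Type*} [CommMonoid M] {ζ : M} (hζ : IsPrimitiveRoot ζ r) {a k : ℕ}
    (ha : a.Coprime r) (hk : k ∈ Ico 1 r) : ζ ^ (k * a) ≠ 1 := fun h =>
  have hrk : r ∣ k := ha.symm.dvd_of_dvd_mul_right (hζ.pow_eq_one_iff_dvd _ |>.1 h)
  absurd (Nat.le_of_dvd (mem_Ico.1 hk).1 hrk) (not_le.2 (mem_Ico.1 hk).2)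

theorem sum_Icc_pow_mul_pow_eq_ite (hζ : IsPrimitiveRoot ζ r) {k l : ℕ} (hk : k < r)
    (hl : l < r) :
    ∑ i ∈ Icc 1 r, ζ ^ (l * (r - i)) * (ζ ^ k) ^ i = if l = k then (r : K) else 0 := by
  have hζ0 : ζ ≠ 0 := hζ.ne_zero (by omega)
  have hterm : ∀ i ∈ Icc 1 r, ζ ^ (l * (r - i)) * (ζ ^ k) ^ i = (ζ ^ k / ζ ^ l) ^ i := by
    intro i hi
    have hinv : ζ ^ (l * (r - i)) * (ζ ^ l) ^ i = 1 := by
      rw [← pow_mul, ← pow_add, ← mul_add, Nat.sub_add_cancel (mem_Icc.1 hi).2, mul_comm,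
        pow_mul, hζ.pow_eq_one, one_pow]
    rw [div_pow, div_eq_mul_inv, mul_comm, eq_inv_of_mul_eq_one_left hinv]
  have hw : (ζ ^ k / ζ ^ l) ^ r = 1 := by
    rw [div_pow, ← pow_mul, ← pow_mul, mul_comm k, mul_comm l, pow_mul, pow_mul, hζ.pow_eq_one,
      one_pow, one_pow, div_one]
  rw [sum_congr rfl hterm]
  split_ifs with h
  · simp [h, div_self (pow_ne_zero _ hζ0)]
  · refine sum_Icc_one_pow_eq_zero hw ?_
    rw [Ne, div_eq_one_iff_eq (pow_ne_zero _ hζ0)]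
    exact fun hkl => h (hζ.pow_inj hl hk hkl.symm)

theorem eval_pow_sum_Icc_C_mul_X_pow (hζ : IsPrimitiveRoot ζ r) (hr : (r : K) ≠ 0) (f : ℕ → K)
    {k : ℕ} (hk : k ∈ Ico 1 r) :
    (∑ i ∈ Icc 1 r, C ((1 / r) * ∑ l ∈ Ico 1 r, ζ ^ (l * (r - i)) * f l) * X ^ i).eval (ζ ^ k)
      = f k := by
  simp only [eval_finsetSum, eval_mul, eval_C, eval_pow, eval_X, sum_mul, mul_sum]
  rw [sum_comm]
  have hl : ∀ l ∈ Ico 1 r, ∑ i ∈ Icc 1 r, 1 / (r : K) * (ζ ^ (l * (r - i)) * f l) * (ζ ^ k) ^ i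
      = if l = k then f k else 0 := by
    intro l hl
    have := hζ.sum_Icc_pow_mul_pow_eq_ite (mem_Ico.1 hk).2 (mem_Ico.1 hl).2
    calc _ = 1 / (r : K) * f l * ∑ i ∈ Icc 1 r, ζ ^ (l * (r - i)) * (ζ ^ k) ^ i := by
          rw [mul_sum]; exact sum_congr rfl fun i _ => by ring
      _ = _ := by
          rw [this]
          split_ifs with h
          · subst h; field_simp
          · simp
  rw [sum_congr rfl hl, sum_ite_eq' _ _ (fun _ => f k), if_pos hk]

theorem geom_sum_X_dvd_of_eval_pow_eq_zero (hζ : IsPrimitiveRoot ζ r) (hr : 0 < r) {p : K[X]}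
    (hp : ∀ k ∈ Ico 1 r, p.eval (ζ ^ k) = 0) : ∑ i ∈ range r, (X : K[X]) ^ i ∣ p := by
  have : NeZero r := ⟨hr.ne'⟩
  have hroots : X ^ r - 1 ∣ (X - 1) * p := by
    rw [X_pow_sub_one_eq_prod hr hζ]
    refine prod_dvd_of_coprime
      ((pairwise_coprime_X_sub_C (Function.injective_id (α := K))).set_pairwise _) ?_
    intro η hη
    obtain ⟨k, hk, rfl⟩ := hζ.eq_pow_of_pow_eq_one ((Polynomial.mem_nthRootsFinset hr 1).1 hη)
    rcases Nat.eq_zero_or_pos k with rfl | hk0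
    · simp
    · exact dvd_mul_of_dvd_right (dvd_iff_isRoot.2 (hp k (mem_Ico.2 ⟨hk0, hk⟩))) _
  rw [← mul_geom_sum] at hroots
  exact (mul_dvd_mul_iff_left (X_sub_C_ne_zero 1)).1 (by simpa using hroots)

end IsPrimitiveRoot

open Polynomial Finset in
theorem ice_cream_numerator_integral_general (r n : ℕ) (hr : 2 ≤ r)
    (a : Fin n → ℕ) (hcop : ∀ j, Nat.Coprime (a j) r)
    (ζ : ℂ) (hζ : ζ = Complex.exp (2 * Real.pi * Complex.I / r))
    (σ : ℕ → ℂ)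
    (hσ : ∀ i, σ i = (1 / (r : ℂ)) *
      ∑ k ∈ Finset.Ico 1 r, ζ ^ (k * i) / ∏ j, (1 - ζ ^ (k * a j)))
    (Δ F : Polynomial ℂ)
    (hΔ : Δ = ∑ i ∈ Finset.Icc 1 r, C (σ (r - i)) * X ^ i)
    (hF : F = ∑ i ∈ Finset.range r, X ^ i)
    (γ : ℤ) :
    ∃ B : LaurentPolynomial ℂ,
      (B.coeff.support : Set ℤ) ⊆ Set.Icc (γ + 1) (γ + r - 1) ∧
      (∀ m : ℤ, ∃ z : ℤ, B.coeff m = z) ∧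
      F.toLaurent ∣ (((1 - X) ^ n * Δ).toLaurent - B) ∧
      F.toLaurent ∣
        ((∏ j, ∑ i ∈ Finset.range (a j), (X : Polynomial ℂ) ^ i).toLaurent * B - 1) := by
  have hζr : IsPrimitiveRoot ζ r := hζ ▸ Complex.isPrimitiveRoot_exp r (by omega)
  have hDΔ : F ∣ (∏ j, (1 - X ^ a j)) * Δ - 1 := by
    rw [hF]
    refine hζr.geom_sum_X_dvd_of_eval_pow_eq_zero (by omega) fun k hk => ?_
    have hD : ∏ j, (1 - ζ ^ (k * a j)) ≠ 0 :=
      prod_ne_zero_iff.2 fun j _ => sub_ne_zero.2 (hζr.pow_mul_ne_one (hcop j) hk).symm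
    have hΔk : Δ.eval (ζ ^ k) = (∏ j, (1 - ζ ^ (k * a j)))⁻¹ := by
      simp only [hΔ, hσ, div_eq_mul_inv]
      exact hζr.eval_pow_sum_Icc_C_mul_X_pow (by exact_mod_cast (by omega : r ≠ 0)) _ hk
    simp [eval_prod, hΔk, ← pow_mul, hD]
  have hQ : IsCoprime (∏ j, ∑ i ∈ range (a j), (X : ℤ[X]) ^ i) (∑ i ∈ range r, X ^ i) :=
    IsCoprime.prod_left fun j _ => isCoprime_geom_sum_geom_sum X (hcop j) (by omega)
  obtain ⟨B, hBsupp, hBinv⟩ :=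
    LaurentPolynomial.exists_support_subset_Icc_toLaurent_dvd_mul_sub_one (by omega) hQ γ
  have hinv := map_dvd (AddMonoidAlgebra.mapRingHom ℤ (Int.castRingHom ℂ)) hBinv
  rw [map_sub, map_mul, map_one, LaurentPolynomial.mapRingHom_toLaurent,
    LaurentPolynomial.mapRingHom_toLaurent] at hinv
  simp only [Polynomial.map_sum, Polynomial.map_prod, Polynomial.map_pow, Polynomial.map_X,
    ← hF] at hinv
  refine ⟨AddMonoidAlgebra.mapRingHom ℤ (Int.castRingHom ℂ) B, fun m hm => hBsupp ?_,
    fun m => ⟨B.coeff m, by simp⟩, ?_, hinv⟩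
  · simpa using hm
  · refine dvd_sub_of_dvd_mul_sub_one ?_ hinv
    rw [← prod_geom_sum_mul_one_sub_pow, Fintype.card_fin] at hDΔ
    simpa [mul_assoc] using map_dvd toLaurent hDΔ

open Polynomial Finset in
/-- For `aⱼ` coprime to `r`, the polynomial `(1−t)ⁿ·Δ(t)` (with `Δ` the Dedekind
sum polynomial of type `(1/r)(a₁,…,aₙ)`) is congruent modulo `F = (1−t^r)/(1−t)`
to a Laurent polynomial with integer coefficients supported in any prescribed
window `[γ+1, γ+r−1]` of `r−1` consecutive exponents; this Laurent polynomial is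
the inverse of `∏ⱼ((1−t^{aⱼ})/(1−t))` modulo `F` with that support. -/
theorem ice_cream_numerator_integral (r n : ℕ) (hr : 2 ≤ r)
    (a : Fin n → ℕ) (ha : ∀ j, 0 < a j) (hcop : ∀ j, Nat.Coprime (a j) r)
    (ζ : ℂ) (hζ : ζ = Complex.exp (2 * Real.pi * Complex.I / r))
    (σ : ℕ → ℂ)
    (hσ : ∀ i, σ i = (1 / (r : ℂ)) *
      ∑ k ∈ Finset.Ico 1 r, ζ ^ (k * i) / ∏ j, (1 - ζ ^ (k * a j)))
    (Δ F : Polynomial ℂ)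
    (hΔ : Δ = ∑ i ∈ Finset.Icc 1 r, C (σ (r - i)) * X ^ i)
    (hF : F = ∑ i ∈ Finset.range r, X ^ i)
    (γ : ℤ) :
    ∃ B : LaurentPolynomial ℂ,
      (B.coeff.support : Set ℤ) ⊆ Set.Icc (γ + 1) (γ + r - 1) ∧
      (∀ m : ℤ, ∃ z : ℤ, B.coeff m = z) ∧
      F.toLaurent ∣ (((1 - X) ^ n * Δ).toLaurent - B) ∧
      F.toLaurent ∣
        ((∏ j, ∑ i ∈ Finset.range (a j), (X : Polynomial ℂ) ^ i).toLaurent * B - 1) :=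
  ice_cream_numerator_integral_general r n hr a hcop ζ hζ σ hσ Δ F hΔ hF γ
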